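/- Let $s\in[\frac{1+\sqrt5}{4},1)$. With the Geronimo–Hardin Furstenberg IFS $\{h_1,h_2,h_3,h_4\}$ (contraction ratio $\frac{1}{2s}$, probabilities all $1/4$) and attractor $A_F$, suppose every point of $A_F$ lies outside at least one of the four images $h_i(A_F)$ (overlapping number $\leq 3$). Then the self-similar measure $\mu_F$ with uniform weights satisfies $\dim_H\mu_F\geq\frac{\log(3/4)}{-\log(2s)}$, and this exceeds $-\frac{\log s}{\log 2}$ for all $s\in(1/2,1)$; i.e., $\frac{\log(4/3)}{\log(2s)}>\frac{\log(1/s)}{\log 2}$ for all $s\in(\frac{1}{2},1)$. -/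

import Mathlib

noncomputable section
open MeasureTheory ENNReal

def ghQ1 (v : ℝ × ℝ) : ℝ × ℝ :=
  (v.1 / 2 + Real.sqrt 3 * v.2 / 2, Real.sqrt 3 * v.1 / 2 - v.2 / 2)

def ghQ2 (v : ℝ × ℝ) : ℝ × ℝ :=
  (v.1 / 2 - Real.sqrt 3 * v.2 / 2, -(Real.sqrt 3) * v.1 / 2 - v.2 / 2)

def ghQ3 (v : ℝ × ℝ) : ℝ × ℝ := (-v.1, v.2)

def ghQ4 (v : ℝ × ℝ) : ℝ × ℝ := (-v.1, -v.2)

def ghH (s : ℝ) : Fin 4 → ℝ × ℝ → ℝ × ℝ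
  | 0 => fun v => (1 / (2*s)) • ghQ1 v + (1, 1 / Real.sqrt 3)
  | 1 => fun v => (1 / (2*s)) • ghQ2 v + (-1, 1 / Real.sqrt 3)
  | 2 => fun v => (1 / (2*s)) • ghQ3 v + (0, -2 / Real.sqrt 3)
  | 3 => fun v => (1 / (2*s)) • ghQ4 v

def d2geo (x y : ℝ × ℝ) : ℝ := Real.sqrt ((x.1 - y.1)^2 + (x.2 - y.2)^2)

lemma d2geo_nonneg (x y : ℝ × ℝ) : 0 ≤ d2geo x y := Real.sqrt_nonneg _

lemma dist_le_d2geo (x y : ℝ × ℝ) : dist x y ≤ d2geo x y := by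
  rw [Prod.dist_eq, d2geo]
  have h1 : dist x.1 y.1 ≤ Real.sqrt ((x.1 - y.1)^2 + (x.2 - y.2)^2) := by
    rw [Real.dist_eq, ← Real.sqrt_sq_eq_abs]
    exact Real.sqrt_le_sqrt (by nlinarith [sq_nonneg (x.2 - y.2)])
  have h2 : dist x.2 y.2 ≤ Real.sqrt ((x.1 - y.1)^2 + (x.2 - y.2)^2) := by
    rw [Real.dist_eq, ← Real.sqrt_sq_eq_abs]
    exact Real.sqrt_le_sqrt (by nlinarith [sq_nonneg (x.1 - y.1)])
  exact max_le h1 h2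

lemma d2geo_le_dist (x y : ℝ × ℝ) : d2geo x y ≤ Real.sqrt 2 * dist x y := by
  rw [Prod.dist_eq, d2geo]
  have hm : 0 ≤ max (dist x.1 y.1) (dist x.2 y.2) := le_max_of_le_left dist_nonneg
  rw [show Real.sqrt 2 * max (dist x.1 y.1) (dist x.2 y.2)
      = Real.sqrt (2 * (max (dist x.1 y.1) (dist x.2 y.2))^2) by
    rw [Real.sqrt_mul (by norm_num), Real.sqrt_sq hm]]
  apply Real.sqrt_le_sqrt
  have e1 : |x.1 - y.1| ≤ max (dist x.1 y.1) (dist x.2 y.2) := by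
    rw [← Real.dist_eq]; exact le_max_left _ _
  have e2 : |x.2 - y.2| ≤ max (dist x.1 y.1) (dist x.2 y.2) := by
    rw [← Real.dist_eq]; exact le_max_right _ _
  have f1 : (x.1 - y.1)^2 ≤ (max (dist x.1 y.1) (dist x.2 y.2))^2 := by
    rw [← sq_abs]; exact pow_le_pow_left₀ (abs_nonneg _) e1 2
  have f2 : (x.2 - y.2)^2 ≤ (max (dist x.1 y.1) (dist x.2 y.2))^2 := by
    rw [← sq_abs]; exact pow_le_pow_left₀ (abs_nonneg _) e2 2
  linarith

lemma d2geo_ghH (s : ℝ) (hs : 0 < s) (i : Fin 4) (x y : ℝ × ℝ) :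
    d2geo (ghH s i x) (ghH s i y) = (2*s)⁻¹ * d2geo x y := by
  have hc : (0:ℝ) ≤ (2*s)⁻¹ := by positivity
  have h3 : Real.sqrt 3 ^ 2 = 3 := Real.sq_sqrt (by norm_num)
  have key : ∀ a b : ℝ, (2*s)⁻¹ * Real.sqrt (a^2 + b^2)
      = Real.sqrt (((2*s)⁻¹)^2 * (a^2 + b^2)) := by
    intro a b
    rw [Real.sqrt_mul (by positivity), Real.sqrt_sq hc]
  fin_cases i <;>
    simp only [ghH, ghQ1, ghQ2, ghQ3, ghQ4, d2geo, Fin.isValue, Prod.smul_mk, smul_eq_mul,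
      Prod.mk_add_mk, Prod.fst_add, Prod.snd_add, Prod.smul_fst, Prod.smul_snd, one_div] <;>
    rw [key] <;> congr 1
  · linear_combination ((2*s)⁻¹^2/4 * ((x.1-y.1)^2+(x.2-y.2)^2)) * h3
  · linear_combination ((2*s)⁻¹^2/4 * ((x.1-y.1)^2+(x.2-y.2)^2)) * h3
  · ring
  · ring

lemma ghH_continuous (s : ℝ) (i : Fin 4) : Continuous (ghH s i) := by
  fin_cases i <;>
  · simp only [ghH, ghQ1, ghQ2, ghQ3, ghQ4, Fin.isValue]
    fun_prop
lemma gh_part2 (s' : ℝ) (hs' : s' ∈ Set.Ioo (1/2 : ℝ) 1) :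
    Real.log (4/3) / Real.log (2*s') > Real.log (1/s') / Real.log 2 := by
  obtain ⟨h1, h2⟩ := hs'
  have hs'0 : 0 < s' := by linarith
  have hl2 : 0 < Real.log 2 := Real.log_pos (by norm_num)
  have ha : 0 < Real.log (2*s') := Real.log_pos (by linarith)
  have hlogs' : Real.log s' < 0 := Real.log_neg hs'0 h2
  have hmul : Real.log (2*s') = Real.log 2 + Real.log s' :=
    Real.log_mul (by norm_num) (ne_of_gt hs'0)
  have hinv : Real.log (1/s') = -Real.log s' := by rw [one_div, Real.log_inv]
  have h43 : Real.log 2 < 4 * Real.log (4/3) := by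
    have h := Real.log_lt_log (by norm_num : (0:ℝ) < 2) (by norm_num : (2:ℝ) < 256/81)
    rw [show (256/81 : ℝ) = (4/3)^4 by norm_num, Real.log_pow] at h
    simpa using h
  rw [gt_iff_lt, div_lt_div_iff₀ hl2 ha, hinv, hmul]
  nlinarith [sq_nonneg (Real.log 2 + 2 * Real.log s'), hl2, h43, hlogs']

theorem stmt19 (s : ℝ) (hs : s ∈ Set.Ico ((1 + Real.sqrt 5) / 4) 1)
    (AF : Set (ℝ × ℝ)) (hAFne : AF.Nonempty) (hAFc : IsCompact AF)
    (hAFinv : AF = ⋃ i : Fin 4, ghH s i '' AF)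
    (μF : Measure (ℝ × ℝ)) [IsProbabilityMeasure μF]
    (hμF : μF = ∑ i : Fin 4, ((1:ℝ≥0∞)/4) • μF.map (ghH s i))
    (hcover : ∀ x ∈ AF, ∃ i : Fin 4, x ∉ ghH s i '' AF) :
    (∀ E : Set (ℝ × ℝ), μF Eᶜ = 0 →
      ENNReal.ofReal (Real.log (3/4) / (-Real.log (2*s))) ≤ dimH E) ∧
    (∀ s' : ℝ, s' ∈ Set.Ioo (1/2 : ℝ) 1 →
      Real.log (4/3) / Real.log (2*s') > Real.log (1/s') / Real.log 2) := by
  obtain ⟨hsl, hsu⟩ := hs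
  have h5 : (2.2:ℝ) ≤ Real.sqrt 5 := by
    nlinarith [Real.sq_sqrt (show (0:ℝ) ≤ 5 by norm_num), Real.sqrt_nonneg 5]
  have h2lt : Real.sqrt 2 ≤ 1.5 := by
    nlinarith [Real.sq_sqrt (show (0:ℝ) ≤ 2 by norm_num), Real.sqrt_nonneg 2]
  have hsq2pos : (0:ℝ) < Real.sqrt 2 := Real.sqrt_pos.2 (by norm_num)
  have hs08 : (0.8:ℝ) ≤ s := by linarith
  have hs0 : 0 < s := by linarith
  have h2s1 : 1 < 2*s := by linarith
  have h2s0 : 0 < 2*s := by linarith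
  set lam : ℝ := (2*s)⁻¹ with hlam
  have hlam0 : 0 < lam := by positivity
  have hlamm : lam * (2*s) = 1 := inv_mul_cancel₀ (ne_of_gt h2s0)
  have hlam1 : lam < 1 := by nlinarith
  have hlam625 : lam ≤ 0.625 := by nlinarith
  set K : Fin 4 → Set (ℝ × ℝ) := fun i => ghH s i '' AF with hKdef
  have hKsub : ∀ i, K i ⊆ AF := by
    intro i y hy
    rw [hAFinv]
    exact Set.mem_iUnion.2 ⟨i, hy⟩
  have hKc : ∀ i, IsCompact (K i) := fun i => hAFc.image (ghH_continuous s i)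
  have hKne : ∀ i, (K i).Nonempty := fun i => hAFne.image _
  have hmeas : ∀ i, Measurable (ghH s i) := fun i => (ghH_continuous s i).measurable
  -- applying the invariance of the measure
  have happ : ∀ S : Set (ℝ × ℝ), MeasurableSet S →
      μF S = ∑ i : Fin 4, (1/4 : ℝ≥0∞) * μF ((ghH s i) ⁻¹' S) := by
    intro S hS
    have h0 : μF S = (∑ i : Fin 4, ((1:ℝ≥0∞)/4) • μF.map (ghH s i)) S := by
      conv_lhs => rw [hμF]
    rw [h0]
    rw [Measure.coe_finset_sum, Finset.sum_apply]
    refine Finset.sum_congr rfl fun i _ => ?_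
    rw [Measure.smul_apply, smul_eq_mul, Measure.map_apply (hmeas i) hS]
  -- support of the measure
  have hAFnull : μF AFᶜ = 0 := by
    set c : ℝ := Real.sqrt 2 * lam with hcdef
    have hc0 : 0 < c := mul_pos hsq2pos hlam0
    have hc1 : c < 1 := by nlinarith
    have hcontr : ∀ (j : Fin 4) (x : ℝ × ℝ),
        Metric.infDist (ghH s j x) AF ≤ c * Metric.infDist x AF := by
      intro j x
      obtain ⟨y, hyA, hyd⟩ := hAFc.exists_infDist_eq_dist hAFne x
      calc Metric.infDist (ghH s j x) AF ≤ dist (ghH s j x) (ghH s j y) :=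
            Metric.infDist_le_dist_of_mem (hKsub j (Set.mem_image_of_mem _ hyA))
        _ ≤ d2geo (ghH s j x) (ghH s j y) := dist_le_d2geo _ _
        _ = lam * d2geo x y := d2geo_ghH s hs0 j x y
        _ ≤ lam * (Real.sqrt 2 * dist x y) :=
            mul_le_mul_of_nonneg_left (d2geo_le_dist x y) hlam0.le
        _ = c * Metric.infDist x AF := by rw [hyd]; ring
    have hSm : ∀ t : ℝ, MeasurableSet {x : ℝ × ℝ | t ≤ Metric.infDist x AF} :=
      fun t => (isClosed_le continuous_const (Metric.continuous_infDist_pt AF)).measurableSet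
    have hstep : ∀ t : ℝ,
        μF {x | t ≤ Metric.infDist x AF} ≤ μF {x | t / c ≤ Metric.infDist x AF} := by
      intro t
      rw [happ _ (hSm t)]
      have hsub : ∀ j : Fin 4, (ghH s j) ⁻¹' {x | t ≤ Metric.infDist x AF} ⊆
          {x | t / c ≤ Metric.infDist x AF} := by
        intro j x hx
        simp only [Set.mem_preimage, Set.mem_setOf_eq] at hx ⊢
        rw [div_le_iff₀ hc0]
        calc t ≤ Metric.infDist (ghH s j x) AF := hx
          _ ≤ c * Metric.infDist x AF := hcontr j x
          _ = Metric.infDist x AF * c := mul_comm _ _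
      calc ∑ i : Fin 4, (1/4 : ℝ≥0∞) * μF ((ghH s i) ⁻¹' {x | t ≤ Metric.infDist x AF})
          ≤ ∑ _i : Fin 4, (1/4 : ℝ≥0∞) * μF {x | t / c ≤ Metric.infDist x AF} :=
            Finset.sum_le_sum fun i _ => mul_le_mul_right (measure_mono (hsub i)) _
        _ = μF {x | t / c ≤ Metric.infDist x AF} := by
            rw [Finset.sum_const, Finset.card_univ, Fintype.card_fin, nsmul_eq_mul,
              Nat.cast_ofNat, ← mul_assoc, show (4:ℝ≥0∞) * (1/4) = 1 by
                rw [one_div]; exact ENNReal.mul_inv_cancel (by norm_num) (by norm_num), one_mul]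
    have hiter : ∀ t : ℝ, ∀ n : ℕ,
        μF {x | t ≤ Metric.infDist x AF} ≤ μF {x | t / c ^ n ≤ Metric.infDist x AF} := by
      intro t n
      induction n with
      | zero => simp
      | succ n ih =>
        refine le_trans ih (le_trans (hstep (t / c ^ n)) (le_of_eq ?_))
        rw [div_div, ← pow_succ]
    have hzero : ∀ t : ℝ, 0 < t → μF {x | t ≤ Metric.infDist x AF} = 0 := by
      intro t ht
      have hanti : Antitone fun n : ℕ => {x : ℝ × ℝ | t / c ^ n ≤ Metric.infDist x AF} := by
        intro m n hmn x hx
        simp only [Set.mem_setOf_eq] at hx ⊢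
        refine le_trans ?_ hx
        apply div_le_div_of_nonneg_left ht.le (by positivity)
        exact pow_le_pow_of_le_one hc0.le hc1.le hmn
      have htendsto := tendsto_measure_iInter_atTop (μ := μF)
        (fun n => (hSm _).nullMeasurableSet) hanti ⟨0, measure_ne_top _ _⟩
      have hempty : (⋂ n : ℕ, {x : ℝ × ℝ | t / c ^ n ≤ Metric.infDist x AF}) = ∅ := by
        rw [Set.eq_empty_iff_forall_notMem]
        intro x hx
        simp only [Set.mem_iInter, Set.mem_setOf_eq] at hx
        have hT : Filter.Tendsto (fun n : ℕ => t / c ^ n) Filter.atTop Filter.atTop := by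
          have hcinv : 1 < c⁻¹ := (one_lt_inv₀ hc0).2 hc1
          have h1 : Filter.Tendsto (fun n : ℕ => (c⁻¹) ^ n) Filter.atTop Filter.atTop :=
            tendsto_pow_atTop_atTop_of_one_lt hcinv
          have h2 := h1.const_mul_atTop ht
          refine h2.congr fun n => ?_
          rw [div_eq_mul_inv, inv_pow]
        obtain ⟨n, hn⟩ := (hT.eventually_gt_atTop (Metric.infDist x AF)).exists
        exact absurd (hx n) (not_le.2 hn)
      rw [hempty, measure_empty] at htendsto
      have := ge_of_tendsto' htendsto (hiter t)
      exact le_antisymm this zero_le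
    have hsubU : AFᶜ ⊆ ⋃ n : ℕ, {x : ℝ × ℝ | 1 / ((n : ℝ) + 1) ≤ Metric.infDist x AF} := by
      intro x hx
      have hpos : 0 < Metric.infDist x AF :=
        (hAFc.isClosed.notMem_iff_infDist_pos hAFne).1 hx
      obtain ⟨n, hn⟩ := exists_nat_one_div_lt hpos
      exact Set.mem_iUnion.2 ⟨n, le_of_lt hn⟩
    exact measure_mono_null hsubU
      (measure_iUnion_null fun n => hzero _ (by positivity))
  -- separation constant
  have hsep : ∃ ρ : ℝ, 0 < ρ ∧ ∀ x ∈ AF, ∃ i, ∀ y ∈ K i, ρ ≤ d2geo x y := by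
    set g : ℝ × ℝ → ℝ := fun x =>
      max (max (Metric.infDist x (K 0)) (Metric.infDist x (K 1)))
          (max (Metric.infDist x (K 2)) (Metric.infDist x (K 3))) with hgdef
    have hgc : Continuous g :=
      (((Metric.continuous_infDist_pt _).max (Metric.continuous_infDist_pt _)).max
        ((Metric.continuous_infDist_pt _).max (Metric.continuous_infDist_pt _)))
    obtain ⟨z, hzA, hz⟩ := hAFc.exists_isMinOn hAFne hgc.continuousOn
    have hcomp_le : ∀ (x : ℝ × ℝ) (i : Fin 4), Metric.infDist x (K i) ≤ g x := by
      intro x i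
      fin_cases i
      · exact le_trans (le_max_left _ _) (le_max_left _ _)
      · exact le_trans (le_max_right _ _) (le_max_left _ _)
      · exact le_trans (le_max_left _ _) (le_max_right _ _)
      · exact le_trans (le_max_right _ _) (le_max_right _ _)
    have hρ0 : 0 < g z := by
      obtain ⟨i, hi⟩ := hcover z hzA
      have : 0 < Metric.infDist z (K i) :=
        (((hKc i).isClosed).notMem_iff_infDist_pos (hKne i)).1 hi
      exact lt_of_lt_of_le this (hcomp_le z i)
    refine ⟨g z, hρ0, ?_⟩
    intro x hxA
    by_contra hcon
    push_neg at hcon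
    have hlt : ∀ i : Fin 4, Metric.infDist x (K i) < g z := by
      intro i
      obtain ⟨y, hyK, hyd⟩ := hcon i
      calc Metric.infDist x (K i) ≤ dist x y := Metric.infDist_le_dist_of_mem hyK
        _ ≤ d2geo x y := dist_le_d2geo x y
        _ < g z := hyd
    have hgx : g x < g z := max_lt (max_lt (hlt 0) (hlt 1)) (max_lt (hlt 2) (hlt 3))
    exact absurd ((isMinOn_iff.1 hz) x hxA) (not_le.2 hgx)
  obtain ⟨ρ, hρ0, hρ⟩ := hsep
  -- the decay estimate
  have decay : ∀ n : ℕ, ∀ U : Set (ℝ × ℝ), MeasurableSet U →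
      (∀ x ∈ U, ∀ y ∈ U, d2geo x y ≤ ρ * lam ^ n) → μF U ≤ (3/4 : ℝ≥0∞) ^ n := by
    intro n
    induction n with
    | zero => intro U _ _; simpa using prob_le_one
    | succ n ih =>
      intro U hU hdiam
      rcases Set.eq_empty_or_nonempty (U ∩ AF) with hUA | ⟨x₀, hx₀U, hx₀A⟩
      · have hsub : U ⊆ AFᶜ := by
          intro x hx hxA
          exact Set.eq_empty_iff_forall_notMem.1 hUA x ⟨hx, hxA⟩
        calc μF U ≤ μF AFᶜ := measure_mono hsub
          _ = 0 := hAFnull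
          _ ≤ _ := zero_le
      · obtain ⟨i, hi⟩ := hρ x₀ hx₀A
        have hUK : ∀ y ∈ U, y ∉ K i := by
          intro y hyU hyK
          have h1 : ρ ≤ d2geo x₀ y := hi y hyK
          have h2 : d2geo x₀ y ≤ ρ * lam ^ (n+1) := hdiam x₀ hx₀U y hyU
          have h3 : lam ^ (n+1) < 1 := pow_lt_one₀ hlam0.le hlam1 (Nat.succ_ne_zero n)
          nlinarith
        rw [happ U hU]
        have hterm : ∀ j : Fin 4, μF ((ghH s j) ⁻¹' U) ≤ (3/4 : ℝ≥0∞) ^ n := by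
          intro j
          apply ih _ (hU.preimage (hmeas j))
          intro x hx y hy
          have h1 := hdiam _ hx _ hy
          rw [d2geo_ghH s hs0 j x y] at h1
          have h2 : lam * d2geo x y ≤ lam * (ρ * lam ^ n) := by
            rw [pow_succ] at h1; nlinarith
          exact le_of_mul_le_mul_left h2 hlam0
        have hterm_i : μF ((ghH s i) ⁻¹' U) = 0 := by
          have hsub : (ghH s i) ⁻¹' U ⊆ AFᶜ := by
            intro x hxin hxA
            exact hUK _ hxin (Set.mem_image_of_mem _ hxA)
          exact le_antisymm (le_trans (measure_mono hsub) hAFnull.le) zero_le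
        calc ∑ j : Fin 4, (1/4 : ℝ≥0∞) * μF ((ghH s j) ⁻¹' U)
            = (1/4 : ℝ≥0∞) * μF ((ghH s i) ⁻¹' U) +
              ∑ j ∈ Finset.univ.erase i, (1/4 : ℝ≥0∞) * μF ((ghH s j) ⁻¹' U) :=
              (Finset.add_sum_erase _ _ (Finset.mem_univ i)).symm
          _ ≤ 0 + ∑ _j ∈ Finset.univ.erase i, (1/4 : ℝ≥0∞) * (3/4 : ℝ≥0∞) ^ n := by
              refine add_le_add (by rw [hterm_i, mul_zero]) ?_
              exact Finset.sum_le_sum fun j _ => mul_le_mul_right (hterm j) _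
          _ = (3 : ℝ≥0∞) * ((1/4 : ℝ≥0∞) * (3/4 : ℝ≥0∞) ^ n) := by
              rw [Finset.sum_const, Finset.card_erase_of_mem (Finset.mem_univ i),
                Finset.card_univ, Fintype.card_fin, nsmul_eq_mul]
              norm_num
          _ = (3/4 : ℝ≥0∞) ^ (n+1) := by
              simp only [pow_succ, div_eq_mul_inv, one_div]
              ring
  -- exponent facts
  set dd : ℝ := Real.log (3/4) / (-Real.log (2*s)) with hdd
  have hlog2s : 0 < Real.log (2*s) := Real.log_pos h2s1
  have hlog34 : Real.log ((3:ℝ)/4) < 0 := Real.log_neg (by norm_num) (by norm_num)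
  have hd0 : 0 < dd := by
    rw [hdd, div_neg, neg_pos]
    exact div_neg_of_neg_of_pos hlog34 hlog2s
  have hlamd : lam ^ dd = 3/4 := by
    rw [Real.rpow_def_of_pos hlam0, hlam, Real.log_inv, hdd]
    rw [show -Real.log (2*s) * (Real.log (3/4) / -Real.log (2*s)) = Real.log (3/4) by
      field_simp]
    exact Real.exp_log (by norm_num)
  set r₀ : ℝ := ρ / (2 * Real.sqrt 2) with hr₀
  have hr₀0 : 0 < r₀ := div_pos hρ0 (by positivity)
  have h2r : 2 * Real.sqrt 2 * r₀ = ρ := by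
    rw [hr₀]; field_simp
  set Creal : ℝ := (4/3) / r₀ ^ dd with hCreal
  have hCreal0 : 0 < Creal := div_pos (by norm_num) (Real.rpow_pos_of_pos hr₀0 dd)
  set C : ℝ≥0∞ := ENNReal.ofReal Creal with hC
  have hCne0 : C ≠ 0 := by
    rw [hC]; simpa using hCreal0
  have hCnetop : C ≠ ⊤ := ENNReal.ofReal_ne_top
  -- Frostman-type bound
  have hbound : ∀ V : Set (ℝ × ℝ), EMetric.diam V ≤ ENNReal.ofReal r₀ →
      μF V ≤ C * EMetric.diam V ^ dd := by
    intro V hV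
    rcases Set.eq_empty_or_nonempty V with rfl | ⟨x, hxV⟩
    · simp
    have hVtop : EMetric.diam V ≠ ⊤ := ne_top_of_le_ne_top ENNReal.ofReal_ne_top hV
    set rb : ℝ := (EMetric.diam V).toReal with hrbdef
    have hrb0 : 0 ≤ rb := ENNReal.toReal_nonneg
    have hconv : ENNReal.ofReal rb = EMetric.diam V := ENNReal.ofReal_toReal hVtop
    have hrbr₀ : rb ≤ r₀ := ENNReal.toReal_le_of_le_ofReal hr₀0.le hV
    have hVbounded : Bornology.IsBounded V := Metric.isBounded_iff_ediam_ne_top.2 hVtop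
    have hVb : V ⊆ Metric.closedBall x rb := by
      intro y hy
      rw [Metric.mem_closedBall]
      exact Metric.dist_le_diam_of_mem hVbounded hy hxV
    have hball : ∀ y ∈ Metric.closedBall x rb, ∀ z ∈ Metric.closedBall x rb,
        d2geo y z ≤ 2 * Real.sqrt 2 * rb := by
      intro y hy z hz
      rw [Metric.mem_closedBall] at hy hz
      calc d2geo y z ≤ Real.sqrt 2 * dist y z := d2geo_le_dist _ _
        _ ≤ Real.sqrt 2 * (dist y x + dist x z) :=
            mul_le_mul_of_nonneg_left (dist_triangle y x z) hsq2pos.le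
        _ ≤ Real.sqrt 2 * (rb + rb) := by
            have hzx : dist x z ≤ rb := by rw [dist_comm]; exact hz
            exact mul_le_mul_of_nonneg_left (add_le_add hy hzx) hsq2pos.le
        _ = 2 * Real.sqrt 2 * rb := by ring
    rcases eq_or_lt_of_le hrb0 with hrbz | hrbpos
    · -- diameter zero
      have hU0 : ∀ n : ℕ, μF (Metric.closedBall x rb) ≤ (3/4 : ℝ≥0∞) ^ n := by
        intro n
        apply decay n _ measurableSet_closedBall
        intro a ha b hb
        calc d2geo a b ≤ 2 * Real.sqrt 2 * rb := hball a ha b hb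
          _ = 0 := by rw [← hrbz]; ring
          _ ≤ ρ * lam ^ n := mul_nonneg hρ0.le (pow_nonneg hlam0.le n)
      have hμ0 : μF (Metric.closedBall x rb) ≤ 0 :=
        ge_of_tendsto' (ENNReal.tendsto_pow_atTop_nhds_zero_of_lt_one
          (by rw [ENNReal.div_lt_iff (by norm_num) (by norm_num)]; norm_num :
            (3/4 : ℝ≥0∞) < 1)) hU0
      calc μF V ≤ μF (Metric.closedBall x rb) := measure_mono hVb
        _ ≤ 0 := hμ0
        _ ≤ _ := zero_le
    · set t : ℝ := rb / r₀ with htdef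
      have ht0 : 0 < t := div_pos hrbpos hr₀0
      have ht1 : t ≤ 1 := div_le_one_of_le₀ hrbr₀ hr₀0.le
      have hex : ∃ m : ℕ, lam ^ m < t := exists_pow_lt_of_lt_one ht0 hlam1
      have hNspec : lam ^ (Nat.find hex) < t := Nat.find_spec hex
      have hN0 : Nat.find hex ≠ 0 := by
        intro h
        rw [h, pow_zero] at hNspec
        linarith
      obtain ⟨n, hn⟩ := Nat.exists_eq_succ_of_ne_zero hN0
      have hNspec' : lam ^ (n+1) < t := by rwa [hn] at hNspec
      have hnge : t ≤ lam ^ n := by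
        by_contra hcon
        push_neg at hcon
        exact Nat.find_min hex (by omega : n < Nat.find hex) hcon
      have hμU : μF V ≤ (3/4 : ℝ≥0∞) ^ n := by
        refine le_trans (measure_mono hVb)
          (decay n _ measurableSet_closedBall ?_)
        intro a ha b hb
        calc d2geo a b ≤ 2 * Real.sqrt 2 * rb := hball a ha b hb
          _ ≤ ρ * lam ^ n := by
            have hrbt : rb = t * r₀ := by rw [htdef]; field_simp
            rw [hrbt, show 2 * Real.sqrt 2 * (t * r₀) = t * (2 * Real.sqrt 2 * r₀) by ring,
              h2r]
            calc t * ρ ≤ lam ^ n * ρ := mul_le_mul_of_nonneg_right hnge hρ0.le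
              _ = ρ * lam ^ n := mul_comm _ _
      have hreal : ((3:ℝ)/4) ^ n ≤ Creal * rb ^ dd := by
        have h1 : ((3:ℝ)/4) ^ (n+1) ≤ t ^ dd := by
          calc ((3:ℝ)/4) ^ (n+1) = (lam ^ dd) ^ (n+1) := by rw [hlamd]
            _ = (lam ^ (n+1) : ℝ) ^ dd := by
                rw [← Real.rpow_natCast (lam ^ dd) (n+1), ← Real.rpow_mul hlam0.le,
                  mul_comm, Real.rpow_mul hlam0.le, Real.rpow_natCast]
            _ ≤ t ^ dd := Real.rpow_le_rpow (pow_nonneg hlam0.le _) hNspec'.le hd0.le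
        have h2 : t ^ dd = rb ^ dd / r₀ ^ dd := by
          rw [htdef]; exact Real.div_rpow hrb0 hr₀0.le dd
        have h3 : ((3:ℝ)/4) ^ n = (4/3) * ((3:ℝ)/4) ^ (n+1) := by rw [pow_succ]; ring
        rw [h3, hCreal]
        have hr₀d : 0 < r₀ ^ dd := Real.rpow_pos_of_pos hr₀0 dd
        rw [h2] at h1
        calc (4/3 : ℝ) * ((3:ℝ)/4) ^ (n+1) ≤ (4/3) * (rb ^ dd / r₀ ^ dd) := by linarith
          _ = 4 / 3 / r₀ ^ dd * rb ^ dd := by ring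
      calc μF V ≤ (3/4 : ℝ≥0∞) ^ n := hμU
        _ = ENNReal.ofReal (((3:ℝ)/4) ^ n) := by
            rw [ENNReal.ofReal_pow (by norm_num : (0:ℝ) ≤ 3/4)]
            congr 1
            rw [ENNReal.ofReal_div_of_pos (by norm_num)]
            simp
        _ ≤ ENNReal.ofReal (Creal * rb ^ dd) := ENNReal.ofReal_le_ofReal hreal
        _ = C * ENNReal.ofReal (rb ^ dd) := by rw [ENNReal.ofReal_mul hCreal0.le, hC]
        _ = C * (ENNReal.ofReal rb) ^ dd := by
            rw [ENNReal.ofReal_rpow_of_nonneg hrb0 hd0.le]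
        _ = C * EMetric.diam V ^ dd := by rw [hconv]
  -- measure ≤ Hausdorff measure
  have hle : C⁻¹ • μF ≤ μH[dd] := by
    apply MeasureTheory.Measure.le_hausdorffMeasure dd _ (ENNReal.ofReal r₀)
      (by simpa using hr₀0)
    intro V hV
    rw [Measure.smul_apply, smul_eq_mul]
    calc C⁻¹ * μF V ≤ C⁻¹ * (C * EMetric.diam V ^ dd) :=
          mul_le_mul_right (hbound V hV) _
      _ = (C⁻¹ * C) * EMetric.diam V ^ dd := (mul_assoc _ _ _).symm
      _ = EMetric.diam V ^ dd := by rw [ENNReal.inv_mul_cancel hCne0 hCnetop, one_mul]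
  constructor
  · intro E hE
    have hμE : (1 : ℝ≥0∞) ≤ μF E := by
      have h1 := measure_union_le (μ := μF) E Eᶜ
      rw [Set.union_compl_self, measure_univ, hE, add_zero] at h1
      exact h1
    have hH : μH[dd] E ≠ 0 := by
      intro h0
      have h1 : C⁻¹ * μF E ≤ μH[dd] E := by
        have := Measure.le_iff'.1 hle E
        simpa [Measure.smul_apply, smul_eq_mul] using this
      rw [h0, le_zero_iff] at h1
      rcases mul_eq_zero.1 h1 with h | h
      · exact (ENNReal.inv_ne_zero.2 hCnetop) h
      · rw [h] at hμE; simp at hμE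
    have hcast : ((dd.toNNReal : NNReal) : ℝ) = dd := Real.coe_toNNReal _ hd0.le
    have hH' : μH[((dd.toNNReal : NNReal) : ℝ)] E ≠ 0 := by rw [hcast]; exact hH
    exact le_dimH_of_hausdorffMeasure_ne_zero hH'
  · exact fun s' hs' => gh_part2 s' hs'

end
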